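/- arXiv:2601.04161 — 3 statements merged into one kernel-verified Lean document; each statement's English description precedes it below -/
import Mathlib

section
/- There is a constant c₁ > 0 depending only on d with the following property: for every n ≥ 1, every balanced elliptic periodic environment ω : T_n → S(d), and every g : T_n → [0,∞), the resolvent R_n g = Σ_{j=0}^∞ (1 − 1/n²)^j L_ω^j g satisfies ‖R_n g‖_∞ ≤ c₁ n² ‖g/c(ω,·)‖_d. -/
open MeasureTheory Filter Topology
open scoped ENNReal NNReal

noncomputable section

abbrev Zd (d : ℕ) := Fin d → ℤ

/-- The `i`-th standard unit vector of `ℤ^d`. -/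
def eZ (d : ℕ) (i : Fin d) : Zd d := Pi.single i 1

/-- `V_d = {±e_1, …, ±e_d, 0}`. -/
def Vfin (d : ℕ) : Finset (Zd d) :=
  ((Finset.univ.image fun i : Fin d => eZ d i) ∪
    (Finset.univ.image fun i : Fin d => -eZ d i)) ∪ {0}

/-- `S(d)`: probability vectors indexed by `V_d` (as functions on `ℤ^d` supported on `V_d`). -/
def Sd (d : ℕ) : Set (Zd d → ℝ) :=
  {p | (∀ v, 0 ≤ p v) ∧ (∀ v ∉ Vfin d, p v = 0) ∧ ∑ v ∈ Vfin d, p v = 1}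

/-- `𝒮(d)`: environments, i.e. maps `ℤ^d → S(d)`, with the product σ-algebra. -/
abbrev Env (d : ℕ) := Zd d → Sd d

/-- The shift `τ_x` on environments. -/
def shiftE {d : ℕ} (x : Zd d) (ω : Env d) : Env d := fun y => ω (x + y)

/-- `|x|₁ = Σ_i |x_i|`. -/
def normOne {d : ℕ} (x : Zd d) : ℤ := ∑ i, |x i|

/-- The second-order difference operator `Δ_i z(x) = z(x+e_i) + z(x−e_i) − 2 z(x)`. -/
def DC (d : ℕ) (z : Zd d → ℝ) (i : Fin d) (x : Zd d) : ℝ :=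
  z (x + eZ d i) + z (x - eZ d i) - 2 * z x

/-- The discrete Monge–Ampère operator `Mz(x) = ∏_i Δ_i z(x)`. -/
def MA (d : ℕ) (z : Zd d → ℝ) (x : Zd d) : ℝ := ∏ i : Fin d, DC d z i x

/-- `z` is concave on `D_n`: for every `x ∈ D_n°` and `v ∈ {±e_1,…,±e_d}`,
`z(x+v) + z(x−v) − 2z(x) ≤ 0`. -/
def IsConcaveD (d n : ℕ) (z : Zd d → ℝ) : Prop :=
  ∀ x : Zd d, normOne x < (n : ℤ) →
    ∀ v : Zd d, (∃ i : Fin d, v = eZ d i ∨ v = -eZ d i) →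
      z (x + v) + z (x - v) - 2 * z x ≤ 0

/-- `c(ω,x) = (∏_{v ∈ V_d ∖ {0}} ω(x,v))^{1/(2d)}`. -/
def cfun (d : ℕ) (ω : Env d) (x : Zd d) : ℝ :=
  (∏ v ∈ (Vfin d).erase 0, (ω x).1 v) ^ (2 * (d : ℝ))⁻¹

/-- `ω` is elliptic: `ω(x,v) > 0` for all `x` and all `v ∈ V_d ∖ {0}`. -/
def Elliptic (d : ℕ) (ω : Env d) : Prop :=
  ∀ x : Zd d, ∀ v ∈ Vfin d, v ≠ 0 → 0 < (ω x).1 v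

/-- `ω` is balanced (env): `ω(x, e_i) = ω(x, −e_i)` for all `x` and `i`. -/
def BalancedEnv (d : ℕ) (ω : Env d) : Prop :=
  ∀ (x : Zd d) (i : Fin d), (ω x).1 (eZ d i) = (ω x).1 (-eZ d i)

/-- The class `𝒜(ω,f)`: concave `u : D_n → [0,∞)` vanishing on `∂D_n` with
`|Mu(x)|^{1/d} ≥ f(x)/c(ω,x)` on `D_n°`. -/
def memA (d n : ℕ) (ω : Env d) (f : Zd d → ℝ) (u : Zd d → ℝ) : Prop :=
  IsConcaveD d n u ∧
  (∀ x : Zd d, normOne x ≤ (n : ℤ) → 0 ≤ u x) ∧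
  (∀ x : Zd d, normOne x = (n : ℤ) → u x = 0) ∧
  ∀ x : Zd d, normOne x < (n : ℤ) → f x / cfun d ω x ≤ |MA d u x| ^ ((d : ℝ)⁻¹)

/-- `g` is `2n`-periodic, i.e. defined on the torus `T_n = ℤ^d/(2nℤ^d)`. -/
def Periodic2n (d n : ℕ) {α : Type*} (g : Zd d → α) : Prop :=
  ∀ (x : Zd d) (i : Fin d), g (x + (2 * n) • eZ d i) = g x

/-- The transition kernel `L_ω g(x) = Σ_{v ∈ V_d} ω(x,v) g(x+v)`. -/
def Lop (d : ℕ) (ω : Env d) (g : Zd d → ℝ) : Zd d → ℝ :=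
  fun x => ∑ v ∈ Vfin d, (ω x).1 v * g (x + v)

/-- The resolventW `R_n g = Σ_{j=0}^∞ (1 − 1/n²)^j L_ω^j g`. -/
def resolventW (d n : ℕ) (ω : Env d) (g : Zd d → ℝ) (x : Zd d) : ℝ :=
  ∑' j : ℕ, (1 - 1 / (n : ℝ) ^ 2) ^ j * (Lop d ω)^[j] g x

/-- A set of representatives `{−n+1,…,n}^d` of the torus `T_n`. -/
def Tfin (d n : ℕ) : Finset (Zd d) :=
  Finset.Icc (fun _ => -(n : ℤ) + 1) fun _ => (n : ℤ)

/-- `‖g‖_q = ((2n)^{-d} Σ_{x ∈ T_n} |g(x)|^q)^{1/q}`. -/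
def lqT (d n : ℕ) (q : ℝ) (g : Zd d → ℝ) : ℝ :=
  (((2 * (n : ℝ)) ^ d)⁻¹ * ∑ x ∈ Tfin d n, |g x| ^ q) ^ q⁻¹

-- Part 1: Vfin structure
lemma eZ_apply_self (d : ℕ) (i : Fin d) : eZ d i i = 1 := by simp [eZ]

lemma eZ_inj (d : ℕ) : Function.Injective (eZ d) := by
  intro i j h
  by_contra hij
  have := congrFun h i
  simp [eZ, Pi.single_apply, hij, Ne.symm hij] at this

lemma eZ_ne_neg (d : ℕ) (i j : Fin d) : eZ d i ≠ -eZ d j := by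
  intro h
  have := congrFun h i
  rcases eq_or_ne j i with rfl | hj
  · simp [eZ, Pi.single_apply] at this
  · simp [eZ, Pi.single_apply, hj] at this

lemma eZ_ne_zero (d : ℕ) (i : Fin d) : eZ d i ≠ 0 := by
  intro h
  have := congrFun h i
  simp [eZ] at this

lemma sum_Vfin (d : ℕ) (F : Zd d → ℝ) :
    ∑ v ∈ Vfin d, F v = F 0 + ((∑ i, F (eZ d i)) + ∑ i, F (-eZ d i)) := by
  rw [Vfin, Finset.sum_union, Finset.sum_union, Finset.sum_image, Finset.sum_image,
    Finset.sum_singleton]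
  · ring
  · intro i _ j _ h; exact neg_injective h |> eZ_inj d
  · intro i _ j _ h; exact eZ_inj d h
  · simp only [Finset.disjoint_left, Finset.mem_image]
    rintro v ⟨i, -, rfl⟩ ⟨j, -, h⟩
    exact eZ_ne_neg d i j h.symm
  · simp only [Finset.disjoint_left, Finset.mem_union, Finset.mem_image, Finset.mem_singleton]
    rintro v h rfl
    rcases h with ⟨i, -, h⟩ | ⟨i, -, h⟩
    · exact eZ_ne_zero d i h
    · exact eZ_ne_zero d i (neg_eq_zero.mp h)

lemma erase_Vfin (d : ℕ) : (Vfin d).erase 0 =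
    (Finset.univ.image fun i : Fin d => eZ d i) ∪
      (Finset.univ.image fun i : Fin d => -eZ d i) := by
  ext v
  simp only [Vfin, Finset.mem_erase, Finset.mem_union, Finset.mem_image, Finset.mem_singleton,
    Finset.mem_univ, true_and]
  constructor
  · rintro ⟨hv, (h | h) | rfl⟩
    · exact Or.inl h
    · exact Or.inr h
    · exact absurd rfl hv
  · rintro (⟨i, rfl⟩ | ⟨i, rfl⟩)
    · exact ⟨eZ_ne_zero d i, Or.inl (Or.inl ⟨i, rfl⟩)⟩
    · exact ⟨fun h => eZ_ne_zero d i (neg_eq_zero.mp h), Or.inl (Or.inr ⟨i, rfl⟩)⟩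

lemma prod_eraseVfin (d : ℕ) (F : Zd d → ℝ) :
    ∏ v ∈ (Vfin d).erase 0, F v = (∏ i, F (eZ d i)) * ∏ i, F (-eZ d i) := by
  rw [erase_Vfin, Finset.prod_union, Finset.prod_image, Finset.prod_image]
  · intro i _ j _ h; exact neg_injective h |> eZ_inj d
  · intro i _ j _ h; exact eZ_inj d h
  · simp only [Finset.disjoint_left, Finset.mem_image]
    rintro v ⟨i, -, rfl⟩ ⟨j, -, h⟩
    exact eZ_ne_neg d i j h.symm

lemma zero_mem_Vfin (d : ℕ) : 0 ∈ Vfin d := by simp [Vfin]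
lemma eZ_mem_Vfin (d : ℕ) (i : Fin d) : eZ d i ∈ Vfin d := by
  simp only [Vfin, Finset.mem_union, Finset.mem_image]
  exact Or.inl (Or.inl ⟨i, Finset.mem_univ i, rfl⟩)
lemma neg_eZ_mem_Vfin (d : ℕ) (i : Fin d) : -eZ d i ∈ Vfin d := by
  simp only [Vfin, Finset.mem_union, Finset.mem_image]
  exact Or.inl (Or.inr ⟨i, Finset.mem_univ i, rfl⟩)

-- env basics
lemma env_nonneg {d : ℕ} (ω : Env d) (x : Zd d) (v : Zd d) : 0 ≤ (ω x).1 v := (ω x).2.1 v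
lemma env_sum_one {d : ℕ} (ω : Env d) (x : Zd d) : ∑ v ∈ Vfin d, (ω x).1 v = 1 := (ω x).2.2.2

/-- Balanced identity: `L h x - h x = ∑ i ω_i (h(x+e_i)+h(x-e_i)-2h(x))`. -/
lemma lop_sub_self {d : ℕ} (ω : Env d) (hbal : BalancedEnv d ω) (h : Zd d → ℝ) (x : Zd d) :
    Lop d ω h x - h x = ∑ i, (ω x).1 (eZ d i) * DC d h i x := by
  have h1 : Lop d ω h x = (ω x).1 0 * h x + (((∑ i, (ω x).1 (eZ d i) * h (x + eZ d i)))
      + ∑ i, (ω x).1 (eZ d i) * h (x - eZ d i)) := by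
    rw [Lop, sum_Vfin d (fun v => (ω x).1 v * h (x + v))]
    simp only [add_zero]
    congr 1
    congr 1
    refine Finset.sum_congr rfl fun i _ => ?_
    rw [← hbal x i, sub_eq_add_neg]
  have h2 : h x = (ω x).1 0 * h x + (((∑ i, (ω x).1 (eZ d i) * h x))
      + ∑ i, (ω x).1 (eZ d i) * h x) := by
    have := env_sum_one ω x
    rw [sum_Vfin d (fun v => (ω x).1 v)] at this
    have h3 : ∑ i, (ω x).1 (-eZ d i) = ∑ i, (ω x).1 (eZ d i) :=
      Finset.sum_congr rfl fun i _ => (hbal x i).symm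
    rw [h3] at this
    have hs : ∑ i, (ω x).1 (eZ d i) * h x = (∑ i, (ω x).1 (eZ d i)) * h x :=
      (Finset.sum_mul _ _ _).symm
    rw [hs]
    linear_combination (-(h x)) * this
  have key : ∀ i : Fin d, (ω x).1 (eZ d i) * DC d h i x
      = ((ω x).1 (eZ d i) * h (x + eZ d i) + (ω x).1 (eZ d i) * h (x - eZ d i))
        - ((ω x).1 (eZ d i) * h x + (ω x).1 (eZ d i) * h x) := by
    intro i; rw [DC]; ring
  rw [Finset.sum_congr rfl (fun i _ => key i), Finset.sum_sub_distrib,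
    Finset.sum_add_distrib, Finset.sum_add_distrib]
  linarith [h1, h2]
lemma smul_eZ_apply (d : ℕ) (c : ℤ) (i j : Fin d) :
    (c • eZ d i) j = if i = j then c else 0 := by
  simp [eZ, Pi.single_apply, mul_ite, eq_comm]

lemma nsmul_eZ_apply (d : ℕ) (c : ℕ) (i j : Fin d) :
    ((c • eZ d i) : Zd d) j = if i = j then (c : ℤ) else 0 := by
  simp [eZ, Pi.single_apply, mul_ite, eq_comm]

lemma add_smul_eZ (d : ℕ) (m : ℕ) (x : Zd d) (i : Fin d) (c : ℤ) :
    (x + c • eZ d i) + (m • eZ d i : Zd d) = x + (c + m) • eZ d i := by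
  funext j
  simp only [Pi.add_apply, smul_eZ_apply, nsmul_eZ_apply]
  split_ifs <;> ring

lemma periodic_step {d n : ℕ} {α : Type*} {F : Zd d → α} (hF : Periodic2n d n F)
    (x : Zd d) (i : Fin d) (k : ℤ) : F (x + (2 * n * k) • eZ d i) = F x := by
  induction k using Int.induction_on with
  | zero => simp
  | succ m ih =>
      have h := hF (x + (2 * n * (m : ℤ)) • eZ d i) i
      rw [add_smul_eZ] at h
      have hc : (2 * (n:ℤ) * (m:ℤ) + ((2 * n : ℕ) : ℤ)) = 2 * n * ((m:ℤ) + 1) := by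
        push_cast; ring
      rw [hc] at h
      rw [h, ih]
  | pred m ih =>
      have h := hF (x + (2 * n * (-(m:ℤ) - 1)) • eZ d i) i
      rw [add_smul_eZ] at h
      have hc : (2 * (n:ℤ) * (-(m:ℤ) - 1) + ((2 * n : ℕ) : ℤ)) = 2 * n * (-(m:ℤ)) := by
        push_cast; ring
      rw [hc] at h
      rw [← h]
      exact ih

lemma periodic_congr {d n : ℕ} {α : Type*} {F : Zd d → α} (hF : Periodic2n d n F)
    (hn : 1 ≤ n) (x y : Zd d) (hxy : ∀ i, (2 * (n : ℤ)) ∣ (x i - y i)) : F x = F y := by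
  choose k hk using hxy
  have main : ∀ s : Finset (Fin d), F (y + ∑ i ∈ s, (2 * n * k i) • eZ d i) = F y := by
    intro s
    induction s using Finset.induction_on with
    | empty => simp
    | @insert a s ha ih =>
        rw [Finset.sum_insert ha, add_comm ((2 * (n:ℤ) * k a) • eZ d a), ← add_assoc]
        rw [periodic_step hF _ a (k a), ih]
  have hxe : x = y + ∑ i : Fin d, (2 * n * k i) • eZ d i := by
    funext j
    rw [Pi.add_apply]
    have h1 : (∑ i : Fin d, (2 * (n:ℤ) * k i) • eZ d i) j
        = ∑ i : Fin d, (if i = j then 2 * (n:ℤ) * k i else 0) := by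
      rw [Finset.sum_apply]
      exact Finset.sum_congr rfl fun i _ => smul_eZ_apply d _ i j
    rw [h1, Finset.sum_ite_eq' Finset.univ j fun i => 2 * (n:ℤ) * k i]
    simp only [Finset.mem_univ, if_true]
    linarith [hk j]
  rw [hxe, main]

def redZ (n : ℕ) (a : ℤ) : ℤ := (a + n - 1) % (2 * n) - n + 1

lemma redZ_lb (n : ℕ) (hn : 1 ≤ n) (a : ℤ) : -(n:ℤ) + 1 ≤ redZ n a := by
  have := Int.emod_nonneg (a + n - 1) (by positivity : (2*(n:ℤ)) ≠ 0)
  unfold redZ; omega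

lemma redZ_ub (n : ℕ) (hn : 1 ≤ n) (a : ℤ) : redZ n a ≤ n := by
  have h2n : (0:ℤ) < 2 * n := by positivity
  have := Int.emod_lt_of_pos (a + n - 1) h2n
  unfold redZ; omega

lemma redZ_dvd (n : ℕ) (a : ℤ) : (2 * (n : ℤ)) ∣ (a - redZ n a) := by
  refine ⟨(a + (n:ℤ) - 1) / (2 * n), ?_⟩
  have : (a + (n:ℤ) - 1) % (2 * n) = a + n - 1 - 2 * n * ((a + n - 1) / (2 * n)) := by
    rw [Int.emod_def]
  unfold redZ
  omega

def redP (d n : ℕ) (x : Zd d) : Zd d := fun i => redZ n (x i)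

lemma redP_mem_Tfin (d n : ℕ) (hn : 1 ≤ n) (x : Zd d) : redP d n x ∈ Tfin d n := by
  rw [Tfin, Finset.mem_Icc]
  exact ⟨fun i => redZ_lb n hn (x i), fun i => redZ_ub n hn (x i)⟩

lemma periodic_red {d n : ℕ} {α : Type*} {F : Zd d → α} (hF : Periodic2n d n F)
    (hn : 1 ≤ n) (x : Zd d) : F x = F (redP d n x) :=
  periodic_congr hF hn x (redP d n x) fun i => redZ_dvd n (x i)

lemma Tfin_nonempty (d n : ℕ) (hn : 1 ≤ n) : (Tfin d n).Nonempty := by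
  refine ⟨fun _ => (n : ℤ), ?_⟩
  rw [Tfin, Finset.mem_Icc]
  exact ⟨fun i => by simp; omega, fun i => le_refl _⟩

/-- Interior ball finset. -/
def Bint (d n : ℕ) (x₀ : Zd d) : Finset (Zd d) :=
  (Finset.Icc (fun i => x₀ i - n) fun i => x₀ i + n).filter
    fun x => normOne (x - x₀) < (n : ℤ)

lemma normOne_nonneg {d : ℕ} (x : Zd d) : 0 ≤ normOne x :=
  Finset.sum_nonneg fun i _ => abs_nonneg _

lemma coord_le_normOne {d : ℕ} (x : Zd d) (i : Fin d) : |x i| ≤ normOne x :=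
  Finset.single_le_sum (f := fun j => |x j|) (fun j _ => abs_nonneg _) (Finset.mem_univ i)

lemma coord_sub_le_normOne {d : ℕ} (x y : Zd d) (i : Fin d) : |x i - y i| ≤ normOne (x - y) := by
  have := coord_le_normOne (x - y) i
  rwa [Pi.sub_apply] at this

lemma mem_Bint {d n : ℕ} (x₀ x : Zd d) : x ∈ Bint d n x₀ ↔ normOne (x - x₀) < (n : ℤ) := by
  rw [Bint, Finset.mem_filter, Finset.mem_Icc]
  constructor
  · exact fun h => h.2
  · intro h
    have hb : ∀ i, |x i - x₀ i| ≤ (n:ℤ) := fun i => (coord_sub_le_normOne x x₀ i).trans h.le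
    refine ⟨⟨fun i => ?_, fun i => ?_⟩, h⟩
    · have := abs_le.mp (hb i); dsimp only; omega
    · have := abs_le.mp (hb i); dsimp only; omega

lemma sum_ball_le {d n : ℕ} (hn : 1 ≤ n) (x₀ : Zd d) (F : Zd d → ℝ)
    (hF0 : ∀ x, 0 ≤ F x) (hFper : Periodic2n d n F) :
    ∑ x ∈ Bint d n x₀, F x ≤ ∑ y ∈ Tfin d n, F y := by
  have hinj : ∀ x ∈ Bint d n x₀, ∀ y ∈ Bint d n x₀, redP d n x = redP d n y → x = y := by
    intro x hx y hy hxy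
    rw [mem_Bint] at hx hy
    funext i
    have hdx := redZ_dvd n (x i)
    have hdy := redZ_dvd n (y i)
    have hxyi : redZ n (x i) = redZ n (y i) := congrFun hxy i
    have hdvd : (2 * (n:ℤ)) ∣ (x i - y i) := by
      have h : x i - y i = (x i - redZ n (x i)) - (y i - redZ n (y i)) := by rw [hxyi]; ring
      rw [h]; exact dvd_sub hdx hdy
    have h1 := abs_lt.mp ((coord_sub_le_normOne x x₀ i).trans_lt hx)
    have h2 := abs_lt.mp ((coord_sub_le_normOne y x₀ i).trans_lt hy)
    have habs : |x i - y i| < 2 * n := by rw [abs_lt]; omega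
    have := Int.eq_zero_of_abs_lt_dvd hdvd habs
    omega
  calc ∑ x ∈ Bint d n x₀, F x = ∑ x ∈ Bint d n x₀, F (redP d n x) :=
        Finset.sum_congr rfl fun x _ => periodic_red hFper hn x
    _ = ∑ y ∈ (Bint d n x₀).image (redP d n), F y := (Finset.sum_image hinj).symm
    _ ≤ ∑ y ∈ Tfin d n, F y := by
        refine Finset.sum_le_sum_of_subset_of_nonneg ?_ fun y _ _ => hF0 y
        intro y hy
        rw [Finset.mem_image] at hy
        obtain ⟨x, -, rfl⟩ := hy
        exact redP_mem_Tfin d n hn x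
section Fix
variable {d : ℕ} (a : Zd d → Zd d → ℝ) (T : (Zd d → ℝ) → (Zd d → ℝ))
  (hT : ∀ h x, T h x = ∑ u ∈ Vfin d, a x u * h (x + u))
  (ha0 : ∀ x u, 0 ≤ a x u) (ha1 : ∀ x, ∑ u ∈ Vfin d, a x u ≤ 1)
  {h₀ : Zd d → ℝ} {C : ℝ} (hh₀ : ∀ x, 0 ≤ h₀ x) (hhC : ∀ x, h₀ x ≤ C)

include hT ha0 ha1 hh₀ hhC

lemma iter_bounds : ∀ j (x : Zd d), 0 ≤ T^[j] h₀ x ∧ T^[j] h₀ x ≤ C := by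
  have hC0 : 0 ≤ C := le_trans (hh₀ 0) (hhC 0)
  intro j
  induction j with
  | zero => intro x; exact ⟨hh₀ x, hhC x⟩
  | succ j ih =>
      intro x
      rw [Function.iterate_succ_apply', hT]
      constructor
      · exact Finset.sum_nonneg fun u _ => mul_nonneg (ha0 x u) (ih (x + u)).1
      · calc ∑ u ∈ Vfin d, a x u * T^[j] h₀ (x + u) ≤ ∑ u ∈ Vfin d, a x u * C :=
              Finset.sum_le_sum fun u _ =>
                mul_le_mul_of_nonneg_left (ih (x + u)).2 (ha0 x u)
          _ = (∑ u ∈ Vfin d, a x u) * C := by rw [Finset.sum_mul]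
          _ ≤ 1 * C := mul_le_mul_of_nonneg_right (ha1 x) hC0
          _ = C := one_mul C

lemma fix_summable {r : ℝ} (hr0 : 0 ≤ r) (hr1 : r < 1) (x : Zd d) :
    Summable fun j : ℕ => r ^ j * T^[j] h₀ x := by
  refine Summable.of_nonneg_of_le
    (fun j => mul_nonneg (pow_nonneg hr0 j) (iter_bounds a T hT ha0 ha1 hh₀ hhC j x).1)
    (fun j => ?_) ((summable_geometric_of_lt_one hr0 hr1).mul_left C)
  exact mul_le_mul_of_nonneg_left (iter_bounds a T hT ha0 ha1 hh₀ hhC j x).2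
    (pow_nonneg hr0 j) |>.trans_eq (mul_comm _ _)

lemma fix_nonneg {r : ℝ} (hr0 : 0 ≤ r) (x : Zd d) :
    0 ≤ ∑' j : ℕ, r ^ j * T^[j] h₀ x :=
  tsum_nonneg fun j => mul_nonneg (pow_nonneg hr0 j)
    (iter_bounds a T hT ha0 ha1 hh₀ hhC j x).1

lemma fix_eq {r : ℝ} (hr0 : 0 ≤ r) (hr1 : r < 1) (x : Zd d) :
    (∑' j : ℕ, r ^ j * T^[j] h₀ x)
      = h₀ x + r * T (fun y => ∑' j : ℕ, r ^ j * T^[j] h₀ y) x := by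
  have hsum : ∀ y : Zd d, Summable fun j : ℕ => r ^ j * T^[j] h₀ y :=
    fix_summable a T hT ha0 ha1 hh₀ hhC hr0 hr1
  have hTW : T (fun y => ∑' j : ℕ, r ^ j * T^[j] h₀ y) x
      = ∑' j : ℕ, r ^ j * T^[j+1] h₀ x := by
    rw [hT]
    have e1 : ∀ u, a x u * (∑' j : ℕ, r ^ j * T^[j] h₀ (x + u))
        = ∑' j : ℕ, a x u * (r ^ j * T^[j] h₀ (x + u)) := fun u => (tsum_mul_left).symm
    rw [Finset.sum_congr rfl fun u _ => e1 u]
    rw [← Summable.tsum_finsetSum fun u _ => (hsum (x + u)).mul_left (a x u)]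
    refine tsum_congr fun j => ?_
    rw [Function.iterate_succ_apply', hT]
    rw [Finset.mul_sum]
    exact Finset.sum_congr rfl fun u _ => by ring
  rw [hTW, ← tsum_mul_left]
  have e2 : ∀ j : ℕ, r * (r ^ j * T^[j+1] h₀ x) = r ^ (j+1) * T^[j+1] h₀ x := by
    intro j; rw [pow_succ]; ring
  rw [tsum_congr e2]
  have := Summable.tsum_eq_zero_add (hsum x)
  rw [this, pow_zero, one_mul, Function.iterate_zero_apply]

end Fix

/-- Weighted AM-GM consequence. -/
lemma amgm_bound (d : ℕ) (hd : 1 ≤ d) (w b : Fin d → ℝ) (hw : ∀ i, 0 < w i)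
    (hb : ∀ i, 0 ≤ b i) (S : ℝ) (hS : ∑ i, w i * b i ≤ S) :
    ∏ i, b i ≤ (S / d) ^ (d : ℕ) / ∏ i, w i := by
  have hd0 : (0:ℝ) < d := by exact_mod_cast hd
  have hS0 : 0 ≤ S :=
    le_trans (Finset.sum_nonneg fun i _ => mul_nonneg (hw i).le (hb i)) hS
  have hwsum : ∑ _i : Fin d, (d:ℝ)⁻¹ = 1 := by
    rw [Finset.sum_const, Finset.card_univ, Fintype.card_fin, nsmul_eq_mul]
    field_simp
  have hgm := Real.geom_mean_le_arith_mean_weighted Finset.univ (fun _ => (d:ℝ)⁻¹)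
    (fun i => w i * b i) (fun i _ => by positivity) hwsum
    (fun i _ => mul_nonneg (hw i).le (hb i))
  have hP : ∏ i, (w i * b i) ^ ((d:ℝ)⁻¹) = (∏ i, w i * b i) ^ ((d:ℝ)⁻¹) := by
    rw [← Real.finset_prod_rpow Finset.univ _ (fun i _ => mul_nonneg (hw i).le (hb i))]
  have hAM : ∑ i, (d:ℝ)⁻¹ * (w i * b i) ≤ S / d := by
    rw [← Finset.mul_sum]
    rw [div_eq_inv_mul]
    exact mul_le_mul_of_nonneg_left hS (by positivity)
  have hPd : (0:ℝ) ≤ ∏ i, w i * b i :=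
    Finset.prod_nonneg fun i _ => mul_nonneg (hw i).le (hb i)
  have key : (∏ i, w i * b i) ≤ (S / d) ^ (d:ℕ) := by
    have h1 : (∏ i, w i * b i) ^ ((d:ℝ)⁻¹) ≤ S / d := by
      rw [← hP]; exact hgm.trans hAM
    have h2 : ((∏ i, w i * b i) ^ ((d:ℝ)⁻¹)) ^ (d:ℕ) ≤ (S / d) ^ (d:ℕ) :=
      pow_le_pow_left₀ (Real.rpow_nonneg hPd _) h1 d
    rwa [← Real.rpow_natCast ((∏ i, w i * b i) ^ ((d:ℝ)⁻¹)) d, ← Real.rpow_mul hPd,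
      inv_mul_cancel₀ (ne_of_gt hd0), Real.rpow_one] at h2
  have hwprod : (0:ℝ) < ∏ i, w i := Finset.prod_pos fun i _ => hw i
  rw [Finset.prod_mul_distrib] at key
  rw [le_div_iff₀ hwprod, mul_comm]
  exact key

/-- Closed ball finset. -/
def Bfull (d n : ℕ) (x₀ : Zd d) : Finset (Zd d) :=
  (Finset.Icc (fun i => x₀ i - n) fun i => x₀ i + n).filter
    fun x => normOne (x - x₀) ≤ (n : ℤ)

lemma mem_Bfull {d n : ℕ} (x₀ x : Zd d) : x ∈ Bfull d n x₀ ↔ normOne (x - x₀) ≤ (n : ℤ) := by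
  rw [Bfull, Finset.mem_filter, Finset.mem_Icc]
  constructor
  · exact fun h => h.2
  · intro h
    have hb : ∀ i, |x i - x₀ i| ≤ (n:ℤ) := fun i => (coord_sub_le_normOne x x₀ i).trans h
    refine ⟨⟨fun i => ?_, fun i => ?_⟩, h⟩
    · have := abs_le.mp (hb i); dsimp only; omega
    · have := abs_le.mp (hb i); dsimp only; omega

lemma normOne_zero (d : ℕ) : normOne (0 : Zd d) = 0 := by
  simp [normOne]

lemma x₀_mem_Bint {d n : ℕ} (hn : 1 ≤ n) (x₀ : Zd d) : x₀ ∈ Bint d n x₀ := by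
  rw [mem_Bint, sub_self, normOne_zero]
  exact_mod_cast hn

lemma normOne_add_single {d : ℕ} (z : Zd d) (i : Fin d) (c : ℤ) :
    normOne (z + c • eZ d i) ≤ normOne z + |c| := by
  unfold normOne
  have h1 : ∀ j, |(z + c • eZ d i) j| ≤ |z j| + (if i = j then |c| else 0) := by
    intro j
    rw [Pi.add_apply, smul_eZ_apply]
    split_ifs
    · exact abs_add_le _ _
    · simp
  calc ∑ j, |(z + c • eZ d i) j| ≤ ∑ j, (|z j| + if i = j then |c| else 0) :=
        Finset.sum_le_sum fun j _ => h1 j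
    _ = (∑ j, |z j|) + ∑ j, (if i = j then |c| else 0) := Finset.sum_add_distrib
    _ = (∑ j, |z j|) + |c| := by rw [Finset.sum_ite_eq Finset.univ i fun _ => |c|]; simp

lemma dot_shift {d : ℕ} (p : Fin d → ℝ) (y x₀ : Zd d) (i : Fin d) (c : ℤ) :
    ∑ i', p i' * (((y + c • eZ d i) i' - x₀ i' : ℤ) : ℝ)
      = (∑ i', p i' * ((y i' - x₀ i' : ℤ) : ℝ)) + (c : ℝ) * p i := by
  have h1 : ∀ i', p i' * (((y + c • eZ d i) i' - x₀ i' : ℤ) : ℝ)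
      = p i' * ((y i' - x₀ i' : ℤ) : ℝ) + (if i = i' then (c:ℝ) * p i' else 0) := by
    intro i'
    rw [Pi.add_apply, smul_eZ_apply]
    split_ifs
    · push_cast; ring
    · push_cast; ring
  rw [Finset.sum_congr rfl fun i' _ => h1 i', Finset.sum_add_distrib,
    Finset.sum_ite_eq Finset.univ i fun i' => (c:ℝ) * p i']
  simp

/-- The discrete ABP-type estimate via the covering argument. -/
lemma abp_bound (d n : ℕ) (hd : 1 ≤ d) (hn : 1 ≤ n) (x₀ : Zd d) (v f c : Zd d → ℝ)
    (hv0 : ∀ x, 0 ≤ v x)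
    (hvout : ∀ x, (n:ℤ) ≤ normOne (x - x₀) → v x = 0)
    (hf0 : ∀ x, 0 ≤ f x) (hc : ∀ x, 0 < c x)
    (hprod : ∀ x, normOne (x - x₀) < (n:ℤ) → (∀ i, DC d v i x ≤ 0) →
      ∏ i, (-(DC d v i x)) ≤ (f x / c x / d) ^ (d:ℕ)) :
    v x₀ ≤ (n : ℝ) * (∑ x ∈ Bint d n x₀, (f x / c x) ^ (d:ℕ)) ^ ((d:ℝ)⁻¹) := by
  have hd0 : (0:ℝ) < d := by exact_mod_cast hd
  have hn0 : (0:ℝ) < n := by exact_mod_cast hn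
  set St := ∑ x ∈ Bint d n x₀, (f x / c x) ^ (d:ℕ) with hSt
  have hSt0 : 0 ≤ St := Finset.sum_nonneg fun x _ => pow_nonneg (div_nonneg (hf0 x) (hc x).le) d
  have hRHS0 : 0 ≤ (n : ℝ) * St ^ ((d:ℝ)⁻¹) := mul_nonneg (by positivity) (Real.rpow_nonneg hSt0 _)
  -- the global max of v
  obtain ⟨xm, hxm_mem, hxm⟩ := Finset.exists_max_image (Bint d n x₀) v ⟨x₀, x₀_mem_Bint hn x₀⟩
  set N := v xm with hN
  have hN0 : 0 ≤ N := hv0 xm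
  have hglob : ∀ y, v y ≤ N := by
    intro y
    by_cases hy : normOne (y - x₀) < (n:ℤ)
    · exact hxm y ((mem_Bint _ _).mpr hy)
    · rw [hvout y (not_lt.mp hy)]; exact hN0
  rcases eq_or_lt_of_le hN0 with hNeq | hNpos
  · exact le_trans (hglob x₀) (le_trans hNeq.symm.le hRHS0)
  -- main case N > 0
  set b := N / (2 * n * d) with hb
  have hb0 : 0 < b := by positivity
  set Q : Set (Fin d → ℝ) := Set.univ.pi fun _ => Set.Ioo (-b) b with hQ
  set Box : Zd d → Set (Fin d → ℝ) := fun x =>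
    Set.univ.pi fun i => Set.Icc (v (x + eZ d i) - v x) (v x - v (x - eZ d i)) with hBox
  -- the covering claim
  have cover : Q ⊆ ⋃ x ∈ Bint d n x₀, Box x := by
    intro p hp
    rw [hQ, Set.mem_pi] at hp
    have hpb : ∀ i, |p i| ≤ b := by
      intro i
      have := hp i (Set.mem_univ i)
      rw [Set.mem_Ioo] at this
      rw [abs_le]; exact ⟨this.1.le, this.2.le⟩
    have hplt : ∀ i, |p i| < b := by
      intro i
      have := hp i (Set.mem_univ i)
      rw [Set.mem_Ioo] at this
      rw [abs_lt]; exact this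
    -- dot products
    set dot : Zd d → ℝ := fun y => ∑ i, p i * ((y i - x₀ i : ℤ) : ℝ) with hdotdef
    have hdot : ∀ y : Zd d, |dot y| ≤ b * (normOne (y - x₀) : ℝ) := by
      intro y
      have h2 : (normOne (y - x₀) : ℝ) = ∑ i, |((y i - x₀ i : ℤ) : ℝ)| := by
        rw [normOne]
        push_cast
        refine Finset.sum_congr rfl fun i _ => ?_
        rw [Pi.sub_apply]
        push_cast
        ring_nf
      calc |dot y| ≤ ∑ i, |p i * ((y i - x₀ i : ℤ) : ℝ)| := Finset.abs_sum_le_sum_abs _ _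
        _ = ∑ i, |p i| * |((y i - x₀ i : ℤ) : ℝ)| := by
            refine Finset.sum_congr rfl fun i _ => abs_mul _ _
        _ ≤ ∑ i, b * |((y i - x₀ i : ℤ) : ℝ)| :=
            Finset.sum_le_sum fun i _ => mul_le_mul_of_nonneg_right (hpb i) (abs_nonneg _)
        _ = b * (normOne (y - x₀) : ℝ) := by rw [← Finset.mul_sum, h2]
    -- maximize over the closed ball
    obtain ⟨xs, hxs_mem, hmax⟩ := Finset.exists_max_image (Bfull d n x₀)
      (fun y => v y - dot y) ⟨x₀, by rw [mem_Bfull, sub_self, normOne_zero]; positivity⟩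
    rw [mem_Bfull] at hxs_mem
    have hbn : b * (n:ℝ) = N / (2 * d) := by
      rw [hb]; field_simp
    have hval_lb : N - N / (2*d) ≤ v xs - dot xs := by
      have h1 := hmax xm (by
        rw [mem_Bfull]
        exact ((mem_Bint _ _).mp hxm_mem).le)
      have h2 : |dot xm| ≤ b * (n:ℝ) := by
        refine (hdot xm).trans ?_
        have : (normOne (xm - x₀) : ℝ) ≤ (n:ℝ) := by
          exact_mod_cast ((mem_Bint _ _).mp hxm_mem).le
        exact mul_le_mul_of_nonneg_left this hb0.le
      rw [hbn] at h2
      have := abs_le.mp h2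
      linarith
    -- xs is interior
    have hxs_int : normOne (xs - x₀) < (n:ℤ) := by
      by_contra hcon
      have heq : normOne (xs - x₀) = (n:ℤ) := le_antisymm hxs_mem (not_lt.mp hcon)
      have hv_xs : v xs = 0 := hvout xs heq.ge
      -- strict bound on |dot xs|
      have hex : ∃ i, (xs - x₀) i ≠ 0 := by
        by_contra hall
        push_neg at hall
        have : normOne (xs - x₀) = 0 := by
          unfold normOne
          refine Finset.sum_eq_zero fun i _ => by rw [hall i]; simp
        omega
      obtain ⟨i₀, hi₀⟩ := hex
      have hstrict : |dot xs| < b * (n:ℝ) := by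
        have h2 : (normOne (xs - x₀) : ℝ) = ∑ i, |((xs i - x₀ i : ℤ) : ℝ)| := by
          rw [normOne]; push_cast
          refine Finset.sum_congr rfl fun i _ => by rw [Pi.sub_apply]; push_cast; ring_nf
        have hlt : ∑ i, |p i| * |((xs i - x₀ i : ℤ) : ℝ)| < ∑ i, b * |((xs i - x₀ i : ℤ) : ℝ)| := by
          refine Finset.sum_lt_sum (fun i _ =>
            mul_le_mul_of_nonneg_right (hpb i) (abs_nonneg _)) ⟨i₀, Finset.mem_univ i₀, ?_⟩
          refine mul_lt_mul_of_pos_right (hplt i₀) ?_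
          rw [Pi.sub_apply] at hi₀
          have : ((xs i₀ - x₀ i₀ : ℤ) : ℝ) ≠ 0 := by exact_mod_cast hi₀
          exact abs_pos.mpr this
        calc |dot xs| ≤ ∑ i, |p i| * |((xs i - x₀ i : ℤ) : ℝ)| := by
              refine (Finset.abs_sum_le_sum_abs _ _).trans ?_
              refine le_of_eq (Finset.sum_congr rfl fun i _ => abs_mul _ _)
          _ < ∑ i, b * |((xs i - x₀ i : ℤ) : ℝ)| := hlt
          _ = b * (normOne (xs - x₀) : ℝ) := by rw [← Finset.mul_sum, h2]
          _ = b * (n:ℝ) := by rw [heq]; norm_cast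
      rw [hbn] at hstrict
      have habs := abs_lt.mp hstrict
      have h2A : 2 * (N / (2 * (d:ℝ))) = N / d := by field_simp
      have hNd : N / (d:ℝ) ≤ N := div_le_self hN0 (by exact_mod_cast hd)
      rw [hv_xs] at hval_lb
      linarith [habs.1, hval_lb]
    -- p belongs to the box at xs
    have hbox : p ∈ Box xs := by
      rw [hBox, Set.mem_pi]
      intro i _
      rw [Set.mem_Icc]
      have hplus : xs + eZ d i ∈ Bfull d n x₀ := by
        rw [mem_Bfull]
        have h1 : (xs + eZ d i) - x₀ = (xs - x₀) + (1:ℤ) • eZ d i := by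
          rw [one_smul]; abel
        rw [h1]
        have := normOne_add_single (xs - x₀) i 1
        simp only [abs_one] at this
        omega
      have hminus : xs - eZ d i ∈ Bfull d n x₀ := by
        rw [mem_Bfull]
        have h1 : (xs - eZ d i) - x₀ = (xs - x₀) + (-1:ℤ) • eZ d i := by
          rw [neg_smul, one_smul]; abel
        rw [h1]
        have := normOne_add_single (xs - x₀) i (-1)
        simp only [abs_neg, abs_one] at this
        omega
      constructor
      · have h1 := hmax (xs + eZ d i) hplus
        have h2 : dot (xs + eZ d i) = dot xs + (1:ℝ) * p i := by
          have h3 : xs + eZ d i = xs + (1:ℤ) • eZ d i := by rw [one_smul]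
          rw [hdotdef, h3]
          have := dot_shift p xs x₀ i 1
          push_cast at this ⊢
          exact this
        rw [h2] at h1
        linarith
      · have h1 := hmax (xs - eZ d i) hminus
        have h2 : dot (xs - eZ d i) = dot xs + (-1:ℝ) * p i := by
          have h3 : xs - eZ d i = xs + (-1:ℤ) • eZ d i := by rw [neg_smul, one_smul]; abel
          rw [hdotdef, h3]
          have := dot_shift p xs x₀ i (-1)
          push_cast at this ⊢
          exact this
        rw [h2] at h1
        linarith
    exact Set.mem_iUnion₂.mpr ⟨xs, (mem_Bint _ _).mpr hxs_int, hbox⟩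
  -- measure estimates
  have hvol_le : volume Q ≤ ∑ x ∈ Bint d n x₀, volume (Box x) :=
    (measure_mono cover).trans (measure_biUnion_finset_le _ _)
  have hvolQ : volume Q = ENNReal.ofReal ((2*b) ^ (d:ℕ)) := by
    rw [hQ, volume_pi_pi]
    have h1 : ∀ _i : Fin d, volume (Set.Ioo (-b) b) = ENNReal.ofReal (2*b) := by
      intro i; rw [Real.volume_Ioo]; congr 1; ring
    rw [Finset.prod_congr rfl fun i _ => h1 i, Finset.prod_const, Finset.card_univ,
      Fintype.card_fin, ← ENNReal.ofReal_pow (by positivity)]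
  have hvolBox : ∀ x, volume (Box x) = ∏ i, ENNReal.ofReal (-(DC d v i x)) := by
    intro x
    rw [hBox]
    rw [volume_pi_pi]
    refine Finset.prod_congr rfl fun i _ => ?_
    rw [Real.volume_Icc]
    congr 1
    rw [DC]; ring
  have hpoint : ∀ x ∈ Bint d n x₀, volume (Box x) ≤ ENNReal.ofReal ((f x / c x / d) ^ (d:ℕ)) := by
    intro x hx
    rw [hvolBox x]
    by_cases hcase : ∀ i, DC d v i x ≤ 0
    · rw [← ENNReal.ofReal_prod_of_nonneg (fun i _ => neg_nonneg.mpr (hcase i))]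
      exact ENNReal.ofReal_le_ofReal (hprod x ((mem_Bint _ _).mp hx) hcase)
    · push_neg at hcase
      obtain ⟨i, hi⟩ := hcase
      have hzero : ENNReal.ofReal (-(DC d v i x)) = 0 := by
        rw [ENNReal.ofReal_eq_zero]; linarith
      rw [Finset.prod_eq_zero (Finset.mem_univ i) hzero]
      exact zero_le
  have hterm0 : ∀ x, (0:ℝ) ≤ (f x / c x / d) ^ (d:ℕ) := fun x =>
    pow_nonneg (div_nonneg (div_nonneg (hf0 x) (hc x).le) hd0.le) d
  have hreal : (2*b) ^ (d:ℕ) ≤ ∑ x ∈ Bint d n x₀, (f x / c x / d) ^ (d:ℕ) := by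
    have h1 : ENNReal.ofReal ((2*b)^(d:ℕ)) ≤
        ENNReal.ofReal (∑ x ∈ Bint d n x₀, (f x / c x / d) ^ (d:ℕ)) := by
      rw [ENNReal.ofReal_sum_of_nonneg (fun x _ => hterm0 x)]
      calc ENNReal.ofReal ((2*b)^(d:ℕ)) = volume Q := hvolQ.symm
        _ ≤ ∑ x ∈ Bint d n x₀, volume (Box x) := hvol_le
        _ ≤ ∑ x ∈ Bint d n x₀, ENNReal.ofReal ((f x / c x / d) ^ (d:ℕ)) :=
            Finset.sum_le_sum hpoint
    rwa [ENNReal.ofReal_le_ofReal_iff (Finset.sum_nonneg fun x _ => hterm0 x)] at h1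
  -- conclude
  have hsum_eq : ∑ x ∈ Bint d n x₀, (f x / c x / d) ^ (d:ℕ) = St / (d:ℝ)^(d:ℕ) := by
    rw [hSt, Finset.sum_div]
    exact Finset.sum_congr rfl fun x _ => by rw [div_pow]
  have h2b : (2*b) = N / ((n:ℝ) * d) := by rw [hb]; field_simp
  have hNd : N ^ (d:ℕ) ≤ ((n:ℝ) * St ^ ((d:ℝ)⁻¹)) ^ (d:ℕ) := by
    have hrpow : (St ^ ((d:ℝ)⁻¹)) ^ (d:ℕ) = St := by
      rw [← Real.rpow_natCast (St ^ ((d:ℝ)⁻¹)) d, ← Real.rpow_mul hSt0,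
        inv_mul_cancel₀ (ne_of_gt hd0), Real.rpow_one]
    rw [mul_pow, hrpow]
    have h3 := hreal
    rw [hsum_eq, h2b] at h3
    have h4 := mul_le_mul_of_nonneg_right h3 (le_of_lt (pow_pos (mul_pos hn0 hd0) d))
    calc N ^ (d:ℕ) = (N / ((n:ℝ)*d))^(d:ℕ) * ((n:ℝ)*d)^(d:ℕ) := by
          rw [div_pow]; field_simp
      _ ≤ (St / (d:ℝ)^(d:ℕ)) * ((n:ℝ)*d)^(d:ℕ) := h4
      _ = (n:ℝ)^(d:ℕ) * St := by rw [mul_pow]; field_simp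
  have hfinal : N ≤ (n:ℝ) * St ^ ((d:ℝ)⁻¹) :=
    (pow_le_pow_iff_left₀ hN0 hRHS0 (by omega : d ≠ 0)).mp hNd
  exact (hglob x₀).trans hfinal

lemma sumsq_shift {d : ℕ} (y x₀ : Zd d) (i : Fin d) (c : ℤ) :
    ∑ i', (((y + c • eZ d i) i' - x₀ i' : ℤ) : ℝ) ^ 2
      = (∑ i', ((y i' - x₀ i' : ℤ) : ℝ) ^ 2) + (2*(c:ℝ)*((y i - x₀ i : ℤ):ℝ) + (c:ℝ)^2) := by
  have h1 : ∀ i', (((y + c • eZ d i) i' - x₀ i' : ℤ) : ℝ) ^ 2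
      = ((y i' - x₀ i' : ℤ) : ℝ) ^ 2
        + (if i = i' then 2*(c:ℝ)*((y i' - x₀ i' : ℤ):ℝ) + (c:ℝ)^2 else 0) := by
    intro i'
    rw [Pi.add_apply, smul_eZ_apply]
    split_ifs
    · push_cast; ring
    · push_cast; ring
  rw [Finset.sum_congr rfl fun i' _ => h1 i', Finset.sum_add_distrib,
    Finset.sum_ite_eq Finset.univ i fun i' => 2*(c:ℝ)*((y i' - x₀ i' : ℤ):ℝ) + (c:ℝ)^2]
  simp

lemma sum_omega_half {d : ℕ} (ω : Env d) (hbal : BalancedEnv d ω) (y : Zd d) :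
    ∑ i, (ω y).1 (eZ d i) ≤ 1/2 := by
  have h1 := env_sum_one ω y
  rw [sum_Vfin d (fun v => (ω y).1 v)] at h1
  have h2 : ∑ i, (ω y).1 (-eZ d i) = ∑ i, (ω y).1 (eZ d i) :=
    Finset.sum_congr rfl fun i _ => (hbal y i).symm
  rw [h2] at h1
  have h3 := env_nonneg ω y 0
  linarith

lemma lop_nonneg {d : ℕ} (ω : Env d) (h : Zd d → ℝ) (hh : ∀ y, 0 ≤ h y) (y : Zd d) :
    0 ≤ Lop d ω h y :=
  Finset.sum_nonneg fun u _ => mul_nonneg (env_nonneg ω y u) (hh (y + u))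

lemma lop_le_of_le {d : ℕ} (ω : Env d) (h : Zd d → ℝ) (K : ℝ) (hh : ∀ y, h y ≤ K) (y : Zd d) :
    Lop d ω h y ≤ K := by
  calc Lop d ω h y ≤ ∑ u ∈ Vfin d, (ω y).1 u * K :=
        Finset.sum_le_sum fun u _ => mul_le_mul_of_nonneg_left (hh (y + u)) (env_nonneg ω y u)
    _ = (∑ u ∈ Vfin d, (ω y).1 u) * K := by rw [Finset.sum_mul]
    _ = K := by rw [env_sum_one ω y, one_mul]

/-- Comparison / maximum principle step: `M ≤ (d+1) v(x₀)`. -/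
lemma comparison (d n : ℕ) (hd : 1 ≤ d) (hn : 1 ≤ n) (ω : Env d) (hbal : BalancedEnv d ω)
    (x₀ : Zd d) (r : ℝ) (hr : r = 1 - 1/(n:ℝ)^2) (hr0 : 0 ≤ r) (hr1 : r < 1)
    (w v g : Zd d → ℝ) (M : ℝ) (hM : M = w x₀)
    (hwM : ∀ y, w y ≤ M) (hM0 : 0 ≤ M)
    (hv0 : ∀ y, 0 ≤ v y) (hvout : ∀ y, (n:ℤ) ≤ normOne (y - x₀) → v y = 0)
    (hwfix : ∀ y, w y = g y + r * Lop d ω w y)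
    (hvfix : ∀ y, normOne (y - x₀) < (n:ℤ) → v y = g y + r * Lop d ω v y) :
    M ≤ ((d:ℝ) + 1) * v x₀ := by
  have hd0 : (0:ℝ) < d := by exact_mod_cast hd
  have hn0 : (0:ℝ) < n := by exact_mod_cast hn
  have hn2 : (0:ℝ) < (n:ℝ)^2 := by positivity
  obtain ⟨δ, hδ⟩ : ∃ δ : ℝ, δ = 1/((d:ℝ)+1) := ⟨_, rfl⟩
  have hδ0 : 0 < δ := by rw [hδ]; positivity
  have hδd : δ * d = 1 - δ := by rw [hδ]; field_simp; ring
  obtain ⟨A, hA⟩ : ∃ A : ℝ, A = δ * (d:ℝ) / (n:ℝ)^2 := ⟨_, rfl⟩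
  have hA0 : 0 ≤ A := by rw [hA]; positivity
  obtain ⟨φ, hφ⟩ : ∃ φ : Zd d → ℝ,
      φ = fun y => 1 - δ + A * ∑ i, ((y i - x₀ i : ℤ) : ℝ)^2 := ⟨_, rfl⟩
  have hφ_lb : ∀ y, 1 - δ ≤ φ y := by
    intro y
    have h0 : 0 ≤ ∑ i, ((y i - x₀ i : ℤ) : ℝ)^2 := Finset.sum_nonneg fun i _ => sq_nonneg _
    simp only [hφ]
    nlinarith
  have hφ_x₀ : φ x₀ = 1 - δ := by
    simp only [hφ]
    have h0 : ∀ i : Fin d, ((x₀ i - x₀ i : ℤ) : ℝ)^2 = 0 := by intro i; simp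
    rw [Finset.sum_congr rfl fun i _ => h0 i]
    simp
  have hφ_out : ∀ y, (n:ℤ) ≤ normOne (y - x₀) → 1 ≤ φ y := by
    intro y hy
    have hcs := Finset.sum_mul_sq_le_sq_mul_sq Finset.univ (fun _ => (1:ℝ))
      (fun i => |((y i - x₀ i : ℤ) : ℝ)|)
    simp only [one_pow, one_mul, Finset.sum_const, Finset.card_univ, Fintype.card_fin,
      nsmul_eq_mul, sq_abs, mul_one] at hcs
    have hnorm : (n:ℝ) ≤ ∑ i, |((y i - x₀ i : ℤ) : ℝ)| := by
      have h0 : ((normOne (y - x₀) : ℤ) : ℝ) = ∑ i, |((y i - x₀ i : ℤ) : ℝ)| := by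
        rw [normOne]; push_cast
        exact Finset.sum_congr rfl fun i _ => by rw [Pi.sub_apply]; push_cast; ring_nf
      rw [← h0]
      exact_mod_cast hy
    have hsq : (n:ℝ)^2 / d ≤ ∑ i, ((y i - x₀ i : ℤ) : ℝ)^2 := by
      rw [div_le_iff₀ hd0]
      calc (n:ℝ)^2 ≤ (∑ i, |((y i - x₀ i : ℤ) : ℝ)|)^2 := by
            apply pow_le_pow_left₀ hn0.le hnorm
        _ ≤ (d:ℝ) * ∑ i, ((y i - x₀ i : ℤ) : ℝ)^2 := hcs
        _ = (∑ i, ((y i - x₀ i : ℤ) : ℝ)^2) * d := mul_comm _ _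
    simp only [hφ]
    have hAd : A * ((n:ℝ)^2 / d) = δ := by rw [hA]; field_simp
    nlinarith
  -- r L φ ≤ φ
  have hLφ : ∀ y, r * Lop d ω φ y ≤ φ y := by
    intro y
    have hDC : ∀ i, DC d φ i y = 2 * A := by
      intro i
      rw [DC]
      simp only [hφ]
      have hplus := sumsq_shift y x₀ i 1
      have hminus := sumsq_shift y x₀ i (-1)
      rw [show y + (1:ℤ) • eZ d i = y + eZ d i by rw [one_smul]] at hplus
      rw [show y + (-1:ℤ) • eZ d i = y - eZ d i by rw [neg_smul, one_smul, sub_eq_add_neg]]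
        at hminus
      rw [hplus, hminus]
      push_cast
      ring
    have h1 : Lop d ω φ y - φ y ≤ A := by
      rw [lop_sub_self ω hbal φ y]
      rw [Finset.sum_congr rfl fun i (_ : i ∈ Finset.univ) => by rw [hDC i]]
      rw [← Finset.sum_mul]
      have hhalf := sum_omega_half ω hbal y
      have hsum0 : 0 ≤ ∑ i, (ω y).1 (eZ d i) :=
        Finset.sum_nonneg fun i _ => env_nonneg ω y _
      nlinarith
    have h2 : r * Lop d ω φ y ≤ r * (φ y + A) :=
      mul_le_mul_of_nonneg_left (by linarith) hr0
    have h3 : r * (φ y + A) = (φ y + A) - (φ y + A)/(n:ℝ)^2 := by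
      rw [hr]; field_simp
    have h4 : A * (n:ℝ)^2 = δ * d := by rw [hA]; field_simp
    have h5 : δ * d ≤ φ y + A := by
      have := hφ_lb y; linarith [hδd]
    have h6 : A ≤ (φ y + A)/(n:ℝ)^2 := by
      rw [le_div_iff₀ hn2]; linarith
    calc r * Lop d ω φ y ≤ r * (φ y + A) := h2
      _ = (φ y + A) - (φ y + A)/(n:ℝ)^2 := h3
      _ ≤ (φ y + A) - A := by linarith
      _ = φ y := by ring
  -- the test function u
  obtain ⟨u, hu⟩ : ∃ u : Zd d → ℝ, u = fun y => w y - v y - M * φ y := ⟨_, rfl⟩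
  have hu_out : ∀ y, (n:ℤ) ≤ normOne (y - x₀) → u y ≤ 0 := by
    intro y hy
    simp only [hu]
    have h1 := hφ_out y hy
    have h2 := hvout y hy
    have h3 := hwM y
    nlinarith
  obtain ⟨x₁, hx₁_mem, hx₁max⟩ := Finset.exists_max_image (Bint d n x₀) u
    ⟨x₀, x₀_mem_Bint hn x₀⟩
  obtain ⟨S, hSd⟩ : ∃ S : ℝ, S = u x₁ := ⟨_, rfl⟩
  have huS : ∀ y, u y ≤ max S 0 := by
    intro y
    by_cases hy : normOne (y - x₀) < (n:ℤ)
    · exact le_max_of_le_left (hSd ▸ hx₁max y ((mem_Bint _ _).mpr hy))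
    · exact le_max_of_le_right (hu_out y (not_lt.mp hy))
  have hS_le : S ≤ 0 := by
    by_contra hS0
    push_neg at hS0
    have hx₁_int : normOne (x₁ - x₀) < (n:ℤ) := (mem_Bint _ _).mp hx₁_mem
    have hlin : Lop d ω u x₁ = Lop d ω w x₁ - Lop d ω v x₁ - M * Lop d ω φ x₁ := by
      rw [Lop, Lop, Lop, Lop, Finset.mul_sum, ← Finset.sum_sub_distrib,
        ← Finset.sum_sub_distrib]
      refine Finset.sum_congr rfl fun u' _ => ?_
      simp only [hu]
      ring
    have hufix : u x₁ ≤ r * Lop d ω u x₁ := by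
      have h1 := hwfix x₁
      have h2 := hvfix x₁ hx₁_int
      have h3 := hLφ x₁
      have h4 : M * (r * Lop d ω φ x₁) ≤ M * φ x₁ := mul_le_mul_of_nonneg_left h3 hM0
      rw [hlin]
      simp only [hu]
      nlinarith
    have hLuS : Lop d ω u x₁ ≤ max S 0 := lop_le_of_le ω u (max S 0) huS x₁
    have hmaxS : max S 0 = S := max_eq_left hS0.le
    rw [hmaxS] at hLuS
    have hcon : S ≤ r * S := by
      rw [hSd]
      exact le_trans hufix (mul_le_mul_of_nonneg_left (hSd ▸ hLuS) hr0)
    nlinarith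
  -- conclude
  have hux₀ : u x₀ ≤ 0 := le_trans (huS x₀) (by rw [max_eq_right hS_le])
  rw [hu] at hux₀
  simp only at hux₀
  rw [hφ_x₀, ← hM] at hux₀
  have hexp : M * (1 - δ) = M - δ * M := by ring
  have hδM : δ * M ≤ v x₀ := by linarith
  have hfin : M = ((d:ℝ)+1) * (δ * M) := by rw [hδ]; field_simp
  rw [hfin]
  exact mul_le_mul_of_nonneg_left hδM (by positivity)

lemma cfun_pos (d : ℕ) (ω : Env d) (hell : Elliptic d ω) (y : Zd d) : 0 < cfun d ω y := by
  rw [cfun]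
  apply Real.rpow_pos_of_pos
  apply Finset.prod_pos
  intro v hv
  rw [Finset.mem_erase] at hv
  exact hell y v hv.2 hv.1

lemma cfun_pow (d : ℕ) (hd : 1 ≤ d) (ω : Env d) (hbal : BalancedEnv d ω) (hell : Elliptic d ω)
    (y : Zd d) : (cfun d ω y) ^ (d:ℕ) = ∏ i, (ω y).1 (eZ d i) := by
  have hd0 : (0:ℝ) < d := by exact_mod_cast hd
  have hP0 : 0 < ∏ i, (ω y).1 (eZ d i) :=
    Finset.prod_pos fun i _ => hell y _ (eZ_mem_Vfin d i) (eZ_ne_zero d i)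
  have hbase : ∏ v ∈ (Vfin d).erase 0, (ω y).1 v = (∏ i, (ω y).1 (eZ d i))^2 := by
    rw [prod_eraseVfin d (fun v => (ω y).1 v)]
    have h2 : ∏ i, (ω y).1 (-eZ d i) = ∏ i, (ω y).1 (eZ d i) :=
      Finset.prod_congr rfl fun i _ => (hbal y i).symm
    rw [h2]
    exact (sq _).symm
  rw [cfun, hbase]
  rw [← Real.rpow_natCast ((((∏ i, (ω y).1 (eZ d i))^2)) ^ ((2 * (d:ℝ))⁻¹)) d,
    ← Real.rpow_mul (by positivity)]
  have he : (2*(d:ℝ))⁻¹ * ((d:ℕ):ℝ) = 2⁻¹ := by field_simp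
  rw [he, ← Real.rpow_natCast (∏ i, (ω y).1 (eZ d i)) 2, ← Real.rpow_mul hP0.le]
  norm_num

lemma cfun_periodic (d n : ℕ) (ω : Env d) (hωper : Periodic2n d n ω) :
    Periodic2n d n (cfun d ω) := by
  intro y i
  rw [cfun, cfun, hωper y i]

/-- Resolvent bound: `‖R_n g‖_∞ ≤ c₁ n² ‖g/c(ω,·)‖_d` for balanced elliptic periodic
environments. -/
theorem stmt8 (d : ℕ) (hd : 1 ≤ d) :
    ∃ c₁ : ℝ, 0 < c₁ ∧
      ∀ n : ℕ, 1 ≤ n →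
        ∀ ω : Env d, Periodic2n d n ω → BalancedEnv d ω → Elliptic d ω →
          ∀ g : Zd d → ℝ, (∀ x : Zd d, 0 ≤ g x) → Periodic2n d n g →
            ∀ x : Zd d,
              |resolventW d n ω g x| ≤
                c₁ * (n : ℝ) ^ 2 * lqT d n d (fun y => g y / cfun d ω y) := by
  refine ⟨2*((d:ℝ)+1), by positivity, ?_⟩
  intro n hn ω hωper hbal hell g hg0 hgper x
  have hd0 : (0:ℝ) < d := by exact_mod_cast hd
  have hn0 : (0:ℝ) < n := by exact_mod_cast hn
  obtain ⟨r, hr⟩ : ∃ r : ℝ, r = 1 - 1/(n:ℝ)^2 := ⟨_, rfl⟩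
  have hn1 : (1:ℝ) ≤ (n:ℝ) := by exact_mod_cast hn
  have hn2 : (1:ℝ) ≤ (n:ℝ)^2 := by nlinarith
  have hr0 : 0 ≤ r := by
    rw [hr]
    have h1 : 1/(n:ℝ)^2 ≤ 1 := by rw [div_le_one (by positivity)]; exact hn2
    linarith
  have hr1 : r < 1 := by
    rw [hr]
    have h1 : 0 < 1/(n:ℝ)^2 := by positivity
    linarith
  -- environment coefficient facts
  have ha0 : ∀ (y u : Zd d), 0 ≤ (ω y).1 u := fun y u => env_nonneg ω y u
  have ha1 : ∀ y, ∑ u ∈ Vfin d, (ω y).1 u ≤ 1 := fun y => (env_sum_one ω y).le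
  have hTL : ∀ (h : Zd d → ℝ) (y : Zd d), Lop d ω h y = ∑ u ∈ Vfin d, (ω y).1 u * h (y + u) :=
    fun h y => rfl
  -- C = max of g
  obtain ⟨xg, hxg_mem, hxg⟩ := Finset.exists_max_image (Tfin d n) g (Tfin_nonempty d n hn)
  have hgC : ∀ y, g y ≤ g xg := fun y => by
    rw [periodic_red hgper hn y]; exact hxg _ (redP_mem_Tfin d n hn y)
  -- the resolvent w and its properties
  obtain ⟨w, hwdef⟩ : ∃ w : Zd d → ℝ, w = fun y => ∑' j : ℕ, r^j * (Lop d ω)^[j] g y := ⟨_, rfl⟩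
  have hres : resolventW d n ω g = w := by
    funext y
    simp only [resolventW, hwdef, hr]
  have hw0 : ∀ y, 0 ≤ w y := by
    intro y; rw [hwdef]
    exact fix_nonneg _ (Lop d ω) hTL ha0 ha1 hg0 hgC hr0 y
  have hwfix : ∀ y, w y = g y + r * Lop d ω w y := by
    intro y; rw [hwdef]
    exact fix_eq _ (Lop d ω) hTL ha0 ha1 hg0 hgC hr0 hr1 y
  have hLper : ∀ h : Zd d → ℝ, Periodic2n d n h → Periodic2n d n (Lop d ω h) := by
    intro h hp y i
    simp only [Lop]
    refine Finset.sum_congr rfl fun u _ => ?_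
    rw [hωper y i]
    congr 1
    rw [add_right_comm]
    exact hp (y + u) i
  have hiterper : ∀ j, Periodic2n d n ((Lop d ω)^[j] g) := by
    intro j
    induction j with
    | zero => simpa using hgper
    | succ j ih => rw [Function.iterate_succ_apply']; exact hLper _ ih
  have hwper : Periodic2n d n w := by
    intro y i
    rw [hwdef]
    exact tsum_congr fun j => by rw [hiterper j y i]
  -- maximum of w
  obtain ⟨x₀, hx₀_mem, hx₀max⟩ := Finset.exists_max_image (Tfin d n) w (Tfin_nonempty d n hn)
  obtain ⟨M, hM⟩ : ∃ M : ℝ, M = w x₀ := ⟨_, rfl⟩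
  have hwM : ∀ y, w y ≤ M := fun y => by
    rw [hM, periodic_red hwper hn y]; exact hx₀max _ (redP_mem_Tfin d n hn y)
  have hM0 : 0 ≤ M := hM ▸ hw0 x₀
  -- Dirichlet problem data
  obtain ⟨aD, haD⟩ : ∃ aD : Zd d → Zd d → ℝ,
      aD = fun y u => if normOne (y - x₀) < (n:ℤ) then (ω y).1 u else 0 := ⟨_, rfl⟩
  obtain ⟨TD, hTD⟩ : ∃ TD : (Zd d → ℝ) → Zd d → ℝ,
      TD = fun h y => ∑ u ∈ Vfin d, aD y u * h (y + u) := ⟨_, rfl⟩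
  obtain ⟨g', hg'⟩ : ∃ g' : Zd d → ℝ,
      g' = fun y => if normOne (y - x₀) < (n:ℤ) then g y else 0 := ⟨_, rfl⟩
  have hTDdef : ∀ (h : Zd d → ℝ) (y : Zd d), TD h y = ∑ u ∈ Vfin d, aD y u * h (y + u) :=
    fun h y => by rw [hTD]
  have haD0 : ∀ y u, 0 ≤ aD y u := by
    intro y u; rw [haD]; dsimp only
    split_ifs
    · exact ha0 y u
    · exact le_refl 0
  have haD1 : ∀ y, ∑ u ∈ Vfin d, aD y u ≤ 1 := by
    intro y; rw [haD]; dsimp only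
    by_cases hy : normOne (y - x₀) < (n:ℤ)
    · simp only [hy, if_true]; exact ha1 y
    · simp only [hy, if_false]; simp
  have hg'0 : ∀ y, 0 ≤ g' y := by
    intro y; rw [hg']; dsimp only
    split_ifs
    · exact hg0 y
    · exact le_refl 0
  have hg'C : ∀ y, g' y ≤ g xg := by
    intro y; rw [hg']; dsimp only
    split_ifs
    · exact hgC y
    · exact hg0 xg
  obtain ⟨v, hvdef⟩ : ∃ v : Zd d → ℝ, v = fun y => ∑' j : ℕ, r^j * TD^[j] g' y := ⟨_, rfl⟩
  have hv0 : ∀ y, 0 ≤ v y := by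
    intro y; rw [hvdef]
    exact fix_nonneg aD TD hTDdef haD0 haD1 hg'0 hg'C hr0 y
  have hvfixall : ∀ y, v y = g' y + r * TD v y := by
    intro y; rw [hvdef]
    exact fix_eq aD TD hTDdef haD0 haD1 hg'0 hg'C hr0 hr1 y
  have hTD_out : ∀ (h : Zd d → ℝ) (y : Zd d), (n:ℤ) ≤ normOne (y - x₀) → TD h y = 0 := by
    intro h y hy
    rw [hTD]; dsimp only
    refine Finset.sum_eq_zero fun u _ => ?_
    rw [haD]; dsimp only
    rw [if_neg (not_lt.mpr hy), zero_mul]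
  have hvout : ∀ y, (n:ℤ) ≤ normOne (y - x₀) → v y = 0 := by
    intro y hy
    have hterm : ∀ j : ℕ, r^j * TD^[j] g' y = 0 := by
      intro j
      cases j with
      | zero =>
          simp only [Function.iterate_zero, id_eq, pow_zero, one_mul]
          rw [hg']; dsimp only
          rw [if_neg (not_lt.mpr hy)]
      | succ j => rw [Function.iterate_succ_apply', hTD_out _ y hy, mul_zero]
    rw [hvdef]
    dsimp only
    rw [tsum_congr hterm, tsum_zero]
  have hTD_int : ∀ (h : Zd d → ℝ) (y : Zd d), normOne (y - x₀) < (n:ℤ) →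
      TD h y = Lop d ω h y := by
    intro h y hy
    rw [hTD]; dsimp only
    rw [hTL]
    refine Finset.sum_congr rfl fun u _ => ?_
    rw [haD]; dsimp only
    rw [if_pos hy]
  have hvfix_int : ∀ y, normOne (y - x₀) < (n:ℤ) → v y = g y + r * Lop d ω v y := by
    intro y hy
    have h1 := hvfixall y
    rw [hTD_int v y hy] at h1
    rw [h1, hg']; dsimp only
    rw [if_pos hy]
  -- comparison
  have hMd : M ≤ ((d:ℝ)+1) * v x₀ :=
    comparison d n hd hn ω hbal x₀ r hr hr0 hr1 w v g M hM hwM hM0 hv0 hvout hwfix hvfix_int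
  -- product bound and ABP
  have hcpos : ∀ y, 0 < cfun d ω y := cfun_pos d ω hell
  have hprod : ∀ y, normOne (y - x₀) < (n:ℤ) → (∀ i, DC d v i y ≤ 0) →
      ∏ i, (-(DC d v i y)) ≤ (g y / cfun d ω y / d) ^ (d:ℕ) := by
    intro y hy hneg
    have hLv := lop_sub_self ω hbal v y
    have hfix := hvfix_int y hy
    have hLv0 : 0 ≤ Lop d ω v y := lop_nonneg ω v hv0 y
    have hsum : ∑ i, (ω y).1 (eZ d i) * (-(DC d v i y)) ≤ g y := by
      have h1 : ∑ i, (ω y).1 (eZ d i) * (-(DC d v i y))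
          = -(∑ i, (ω y).1 (eZ d i) * DC d v i y) := by
        rw [← Finset.sum_neg_distrib]
        exact Finset.sum_congr rfl fun i _ => mul_neg _ _
      rw [h1, ← hLv]
      have h2 : 0 ≤ (1-r) * Lop d ω v y := mul_nonneg (by linarith) hLv0
      have h3 : (1-r) * Lop d ω v y = Lop d ω v y - r * Lop d ω v y := by ring
      linarith
    have hwpos : ∀ i, 0 < (ω y).1 (eZ d i) :=
      fun i => hell y _ (eZ_mem_Vfin d i) (eZ_ne_zero d i)
    have hb0 : ∀ i, 0 ≤ -(DC d v i y) := fun i => neg_nonneg.mpr (hneg i)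
    have ham := amgm_bound d hd (fun i => (ω y).1 (eZ d i)) (fun i => -(DC d v i y))
      hwpos hb0 (g y) hsum
    rw [← cfun_pow d hd ω hbal hell y] at ham
    have heq : (g y / d) ^ (d:ℕ) / (cfun d ω y) ^ (d:ℕ)
        = (g y / cfun d ω y / d) ^ (d:ℕ) := by
      rw [← div_pow, div_right_comm]
    exact ham.trans (le_of_eq heq)
  have habp := abp_bound d n hd hn x₀ v g (cfun d ω) hv0 hvout hg0 hcpos hprod
  -- sum over the ball vs sum over the torus
  have hper2 : Periodic2n d n (fun y => (g y / cfun d ω y) ^ (d:ℕ)) := by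
    intro y i
    simp only
    rw [hgper y i, cfun_periodic d n ω hωper y i]
  have hsum_le : ∑ y ∈ Bint d n x₀, (g y / cfun d ω y) ^ (d:ℕ)
      ≤ ∑ y ∈ Tfin d n, (g y / cfun d ω y) ^ (d:ℕ) :=
    sum_ball_le hn x₀ _ (fun y => pow_nonneg (div_nonneg (hg0 y) (hcpos y).le) d) hper2
  have hBsum0 : 0 ≤ ∑ y ∈ Bint d n x₀, (g y / cfun d ω y) ^ (d:ℕ) :=
    Finset.sum_nonneg fun y _ => pow_nonneg (div_nonneg (hg0 y) (hcpos y).le) d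
  have hTsum0 : 0 ≤ ∑ y ∈ Tfin d n, (g y / cfun d ω y) ^ (d:ℕ) :=
    Finset.sum_nonneg fun y _ => pow_nonneg (div_nonneg (hg0 y) (hcpos y).le) d
  have hmono : (∑ y ∈ Bint d n x₀, (g y / cfun d ω y) ^ (d:ℕ)) ^ ((d:ℝ)⁻¹)
      ≤ (∑ y ∈ Tfin d n, (g y / cfun d ω y) ^ (d:ℕ)) ^ ((d:ℝ)⁻¹) :=
    Real.rpow_le_rpow hBsum0 hsum_le (by positivity)
  -- identify with lqT
  have hTsum_eq : ∑ y ∈ Tfin d n, (g y / cfun d ω y) ^ (d:ℕ)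
      = ∑ y ∈ Tfin d n, |g y / cfun d ω y| ^ ((d:ℕ):ℝ) := by
    refine Finset.sum_congr rfl fun y _ => ?_
    rw [abs_of_nonneg (div_nonneg (hg0 y) (hcpos y).le), Real.rpow_natCast]
  have hL0 : 0 ≤ lqT d n d (fun y => g y / cfun d ω y) := by
    rw [lqT]
    apply Real.rpow_nonneg
    apply mul_nonneg (by positivity)
    exact Finset.sum_nonneg fun y _ => Real.rpow_nonneg (abs_nonneg _) _
  have hkey : (∑ y ∈ Tfin d n, (g y / cfun d ω y) ^ (d:ℕ)) ^ ((d:ℝ)⁻¹)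
      = 2 * (n:ℝ) * lqT d n d (fun y => g y / cfun d ω y) := by
    rw [hTsum_eq, lqT]
    have hIsum0 : 0 ≤ ∑ y ∈ Tfin d n, |g y / cfun d ω y| ^ ((d:ℕ):ℝ) :=
      Finset.sum_nonneg fun y _ => Real.rpow_nonneg (abs_nonneg _) _
    have hpow : ((2*(n:ℝ))^(d:ℕ)) ^ ((d:ℝ)⁻¹) = 2*(n:ℝ) := by
      rw [← Real.rpow_natCast (2*(n:ℝ)) d, ← Real.rpow_mul (by positivity),
        mul_inv_cancel₀ (ne_of_gt hd0), Real.rpow_one]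
    have hsplit : ∑ y ∈ Tfin d n, |g y / cfun d ω y| ^ ((d:ℕ):ℝ)
        = (2*(n:ℝ))^(d:ℕ) * (((2*(n:ℝ))^(d:ℕ))⁻¹ *
            ∑ y ∈ Tfin d n, |g y / cfun d ω y| ^ ((d:ℕ):ℝ)) := by
      field_simp
    rw [hsplit, Real.mul_rpow (by positivity) (by positivity), hpow]
    congr 2
    field_simp
  -- final chain
  have hfinal : |resolventW d n ω g x| ≤ ((d:ℝ)+1) * ((n:ℝ) *
      ((∑ y ∈ Tfin d n, (g y / cfun d ω y) ^ (d:ℕ)) ^ ((d:ℝ)⁻¹))) := by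
    rw [hres, abs_of_nonneg (hw0 x)]
    calc w x ≤ M := hwM x
      _ ≤ ((d:ℝ)+1) * v x₀ := hMd
      _ ≤ ((d:ℝ)+1) * ((n:ℝ) *
          ((∑ y ∈ Bint d n x₀, (g y / cfun d ω y) ^ (d:ℕ)) ^ ((d:ℝ)⁻¹))) :=
          mul_le_mul_of_nonneg_left habp (by positivity)
      _ ≤ _ := by
          apply mul_le_mul_of_nonneg_left _ (by positivity : (0:ℝ) ≤ (d:ℝ)+1)
          exact mul_le_mul_of_nonneg_left hmono hn0.le
  rw [hkey] at hfinal
  calc |resolventW d n ω g x|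
      ≤ ((d:ℝ)+1) * ((n:ℝ) * (2 * (n:ℝ) * lqT d n d (fun y => g y / cfun d ω y))) := hfinal
    _ = 2*((d:ℝ)+1) * (n:ℝ)^2 * lqT d n d (fun y => g y / cfun d ω y) := by ring
end
end

section
/- Define u : D_n → ℝ by u(x) = n(n+1) − |x|₁(|x|₁+1). Then u is concave on D_n, u ≥ 0, u ≡ 0 on ∂D_n, and Δ_i u(x) ≤ −2 for every x ∈ D_n° and every i = 1,…,d. Consequently, for every elliptic environment ω and every f : D_n → [0,∞) with f ≡ 0 on ∂D_n there exists γ > 0 such that γu ∈ 𝒜(ω,f); in particular 𝒜(ω,f) is nonempty. -/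
open MeasureTheory Filter Topology
open scoped ENNReal NNReal

noncomputable section

/-- The barrier function `u(x) = n(n+1) − |x|₁(|x|₁+1)`. -/
def uBar (d n : ℕ) (x : Zd d) : ℝ :=
  (n : ℝ) * ((n : ℝ) + 1) - (normOne x : ℝ) * ((normOne x : ℝ) + 1)

lemma normOne_update {d : ℕ} (x : Zd d) (i : Fin d) (c : ℤ) :
    normOne (Function.update x i c) = normOne x - |x i| + |c| := by
  unfold normOne
  have h1 : ∀ j, |Function.update x i c j| = Function.update (fun j => |x j|) i |c| j := by
    intro j; by_cases hj : j = i
    · subst hj; simp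
    · simp [Function.update_of_ne hj]
  rw [Finset.sum_congr rfl fun j _ => h1 j, Finset.sum_update_of_mem (Finset.mem_univ i),
      ← Finset.add_sum_erase _ _ (Finset.mem_univ i), Finset.erase_eq]
  ring

lemma add_e_eq {d : ℕ} (x : Zd d) (i : Fin d) :
    x + eZ d i = Function.update x i (x i + 1) := by
  funext j; by_cases hj : j = i
  · subst hj; simp [eZ]
  · simp [eZ, Pi.single_eq_of_ne hj, Function.update_of_ne hj]

lemma sub_e_eq {d : ℕ} (x : Zd d) (i : Fin d) :
    x - eZ d i = Function.update x i (x i - 1) := by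
  funext j; by_cases hj : j = i
  · subst hj; simp [eZ]
  · simp [eZ, Pi.single_eq_of_ne hj, Function.update_of_ne hj]

lemma DC_uBar_le {d : ℕ} (n : ℕ) (x : Zd d) (i : Fin d) :
    DC d (uBar d n) i x ≤ -2 := by
  have hm0 : (0:ℝ) ≤ (normOne x : ℝ) := by exact_mod_cast normOne_nonneg x
  unfold DC uBar
  rw [add_e_eq, sub_e_eq, normOne_update, normOne_update]
  rcases lt_trichotomy (x i) 0 with h | h | h
  · rw [abs_of_neg h, abs_of_nonpos (by omega), abs_of_neg (by omega)]
    push_cast; ring_nf; nlinarith [hm0]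
  · rw [h]; norm_num
    nlinarith [hm0]
  · rw [abs_of_pos h, abs_of_pos (by omega), abs_of_nonneg (by omega)]
    push_cast; ring_nf; nlinarith [hm0]

/-- The barrier `u` is concave on `D_n`, nonnegative on `D_n`, vanishes on `∂D_n`, has
`Δ_i u ≤ −2` on `D_n°`, and a positive multiple of it belongs to `𝒜(ω,f)`; in particular
`𝒜(ω,f)` is nonempty. -/
theorem stmt11 (d n : ℕ) (hd : 1 ≤ d) (hn : 1 ≤ n) :
    IsConcaveD d n (uBar d n) ∧
    (∀ x : Zd d, normOne x ≤ (n : ℤ) → 0 ≤ uBar d n x) ∧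
    (∀ x : Zd d, normOne x = (n : ℤ) → uBar d n x = 0) ∧
    (∀ x : Zd d, normOne x < (n : ℤ) → ∀ i : Fin d, DC d (uBar d n) i x ≤ -2) ∧
    ∀ ω : Env d, Elliptic d ω →
      ∀ f : Zd d → ℝ,
        (∀ x : Zd d, normOne x ≤ (n : ℤ) → 0 ≤ f x) →
        (∀ x : Zd d, normOne x = (n : ℤ) → f x = 0) →
        ∃ γ : ℝ, 0 < γ ∧ memA d n ω f (fun x => γ * uBar d n x) := by
  have hconc : IsConcaveD d n (uBar d n) := by
    rintro x hx v ⟨i, hv | hv⟩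
    · have hDC := DC_uBar_le n x i
      unfold DC at hDC
      subst hv; linarith
    · have hDC := DC_uBar_le n x i
      unfold DC at hDC
      subst hv
      rw [sub_neg_eq_add, ← sub_eq_add_neg]
      linarith
  have hnonneg : ∀ x : Zd d, normOne x ≤ (n : ℤ) → 0 ≤ uBar d n x := by
    intro x hx
    have h0 : (0:ℝ) ≤ (normOne x : ℝ) := by exact_mod_cast normOne_nonneg x
    have h1 : (normOne x : ℝ) ≤ n := by exact_mod_cast hx
    unfold uBar; nlinarith
  have hbd : ∀ x : Zd d, normOne x = (n : ℤ) → uBar d n x = 0 := by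
    intro x hx
    unfold uBar
    rw [hx]; push_cast; ring
  refine ⟨hconc, hnonneg, hbd, fun x _ i => DC_uBar_le n x i, ?_⟩
  intro ω hω f hf0 _hfb
  have hc : ∀ x : Zd d, 0 < cfun d ω x := by
    intro x
    unfold cfun
    apply Real.rpow_pos_of_pos
    apply Finset.prod_pos
    intro v hv
    exact hω x v (Finset.mem_of_mem_erase hv) (Finset.ne_of_mem_erase hv)
  set S : Finset (Zd d) := Finset.Icc (fun _ => -(n:ℤ)) (fun _ => (n:ℤ)) with hS
  set γ : ℝ := 1 + ∑ x ∈ S, max 0 (f x / (2 * cfun d ω x)) with hγ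
  have hsum0 : (0:ℝ) ≤ ∑ x ∈ S, max 0 (f x / (2 * cfun d ω x)) :=
    Finset.sum_nonneg fun _ _ => le_max_left _ _
  have hγ1 : (1:ℝ) ≤ γ := by rw [hγ]; linarith
  have hγpos : (0:ℝ) < γ := lt_of_lt_of_le one_pos hγ1
  refine ⟨γ, hγpos, ?_, ?_, ?_, ?_⟩
  · intro x hx v hv
    have h := hconc x hx v hv
    have heq : γ * uBar d n (x + v) + γ * uBar d n (x - v) - 2 * (γ * uBar d n x)
        = γ * (uBar d n (x + v) + uBar d n (x - v) - 2 * uBar d n x) := by ring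
    show γ * uBar d n (x + v) + γ * uBar d n (x - v) - 2 * (γ * uBar d n x) ≤ 0
    rw [heq]
    exact mul_nonpos_of_nonneg_of_nonpos hγpos.le h
  · intro x hx
    exact mul_nonneg hγpos.le (hnonneg x hx)
  · intro x hx
    show γ * uBar d n x = 0
    rw [hbd x hx, mul_zero]
  · intro x hx
    have hxS : x ∈ S := by
      rw [hS, Finset.mem_Icc]
      have hj : ∀ j, |x j| ≤ (n:ℤ) := by
        intro j
        have h1 : |x j| ≤ normOne x :=
          Finset.single_le_sum (f := fun k => |x k|) (fun k _ => abs_nonneg _)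
            (Finset.mem_univ j)
        exact le_trans h1 hx.le
      exact ⟨fun j => (abs_le.mp (hj j)).1, fun j => (abs_le.mp (hj j)).2⟩
    have hfc : f x / (2 * cfun d ω x) ≤ γ := by
      have h1 : f x / (2 * cfun d ω x) ≤ max 0 (f x / (2 * cfun d ω x)) := le_max_right _ _
      have h2 : max 0 (f x / (2 * cfun d ω x)) ≤ ∑ y ∈ S, max 0 (f y / (2 * cfun d ω y)) :=
        Finset.single_le_sum (f := fun y => max 0 (f y / (2 * cfun d ω y)))
          (fun y _ => le_max_left _ _) hxS
      rw [hγ]; linarith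
    have hDCγ : ∀ i : Fin d, DC d (fun y => γ * uBar d n y) i x = γ * DC d (uBar d n) i x := by
      intro i; unfold DC; ring
    have hMA : (2*γ)^d ≤ |MA d (fun y => γ * uBar d n y) x| := by
      unfold MA
      rw [Finset.abs_prod]
      rw [show (2*γ)^d = ∏ _i : Fin d, (2*γ) from by
        rw [Finset.prod_const, Finset.card_univ, Fintype.card_fin]]
      apply Finset.prod_le_prod (fun i _ => by positivity)
      intro i _
      rw [hDCγ i, abs_mul, abs_of_pos hγpos]
      have h2 : (2:ℝ) ≤ |DC d (uBar d n) i x| := by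
        have := DC_uBar_le n x i
        rw [abs_of_nonpos (by linarith)]
        linarith
      nlinarith [hγpos.le]
    have hdne : ((d:ℝ)) ≠ 0 := Nat.cast_ne_zero.mpr (by omega)
    have hpow : 2*γ ≤ |MA d (fun y => γ * uBar d n y) x| ^ ((d:ℝ)⁻¹) := by
      have h1 : ((2*γ)^d : ℝ) ^ ((d:ℝ)⁻¹)
          ≤ |MA d (fun y => γ * uBar d n y) x| ^ ((d:ℝ)⁻¹) :=
        Real.rpow_le_rpow (by positivity) hMA (by positivity)
      rwa [← Real.rpow_natCast (2*γ) d, ← Real.rpow_mul (by positivity),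
        mul_inv_cancel₀ hdne, Real.rpow_one] at h1
    have hcx := hc x
    have hfin : f x / cfun d ω x ≤ 2*γ := by
      rw [div_le_iff₀ (by positivity)] at hfc
      rw [div_le_iff₀ hcx]
      linarith
    linarith
end
end

section
/- Let ω be an elliptic environment and f : D_n → [0,∞) with f ≡ 0 on ∂D_n. If z₁, z₂ ∈ 𝒜(ω,f), then the pointwise minimum z₁ ∧ z₂ also belongs to 𝒜(ω,f). -/
open MeasureTheory Filter Topology
open scoped ENNReal NNReal

noncomputable section

lemma key_min (d n : ℕ) (x : Zd d) (hx : normOne x < (n : ℤ)) (z w : Zd d → ℝ)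
    (hcz : IsConcaveD d n z) (h : z x ≤ w x) :
    |MA d z x| ≤ |MA d (fun y => min (z y) (w y)) x| := by
  have hmin : min (z x) (w x) = z x := min_eq_left h
  have hDC : ∀ i : Fin d, DC d (fun y => min (z y) (w y)) i x ≤ DC d z i x := by
    intro i
    have h1 : min (z (x + eZ d i)) (w (x + eZ d i)) ≤ z (x + eZ d i) := min_le_left _ _
    have h2 : min (z (x - eZ d i)) (w (x - eZ d i)) ≤ z (x - eZ d i) := min_le_left _ _
    simp only [DC, hmin]
    linarith
  have hDCz : ∀ i : Fin d, DC d z i x ≤ 0 := fun i =>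
    hcz x hx (eZ d i) ⟨i, Or.inl rfl⟩
  rw [MA, MA, Finset.abs_prod, Finset.abs_prod]
  refine Finset.prod_le_prod (fun i _ => abs_nonneg _) fun i _ => ?_
  rw [abs_of_nonpos (hDCz i), abs_of_nonpos ((hDC i).trans (hDCz i))]
  linarith [hDC i]

/-- The class `𝒜(ω,f)` is closed under pointwise minimum. -/
theorem stmt12 (d n : ℕ) (hd : 1 ≤ d) (hn : 1 ≤ n) (ω : Env d) (hell : Elliptic d ω)
    (f : Zd d → ℝ)
    (hf0 : ∀ x : Zd d, normOne x ≤ (n : ℤ) → 0 ≤ f x)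
    (hfb : ∀ x : Zd d, normOne x = (n : ℤ) → f x = 0)
    (z₁ z₂ : Zd d → ℝ) (hz₁ : memA d n ω f z₁) (hz₂ : memA d n ω f z₂) :
    memA d n ω f (fun x => min (z₁ x) (z₂ x)) := by
  obtain ⟨hc₁, hp₁, hb₁, hm₁⟩ := hz₁
  obtain ⟨hc₂, hp₂, hb₂, hm₂⟩ := hz₂
  have hcomm : (fun y => min (z₁ y) (z₂ y)) = (fun y => min (z₂ y) (z₁ y)) :=
    funext fun y => min_comm _ _
  refine ⟨?_, ?_, ?_, ?_⟩
  · intro x hx v hv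
    rcases le_total (z₁ x) (z₂ x) with h | h
    · have hz := hc₁ x hx v hv
      have h1 : min (z₁ (x + v)) (z₂ (x + v)) ≤ z₁ (x + v) := min_le_left _ _
      have h2 : min (z₁ (x - v)) (z₂ (x - v)) ≤ z₁ (x - v) := min_le_left _ _
      have hm : min (z₁ x) (z₂ x) = z₁ x := min_eq_left h
      simp only [hm]
      linarith
    · have hz := hc₂ x hx v hv
      have h1 : min (z₁ (x + v)) (z₂ (x + v)) ≤ z₂ (x + v) := min_le_right _ _
      have h2 : min (z₁ (x - v)) (z₂ (x - v)) ≤ z₂ (x - v) := min_le_right _ _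
      have hm : min (z₁ x) (z₂ x) = z₂ x := min_eq_right h
      simp only [hm]
      linarith
  · intro x hx; exact le_min (hp₁ x hx) (hp₂ x hx)
  · intro x hx; simp [hb₁ x hx, hb₂ x hx]
  · intro x hx
    rcases le_total (z₁ x) (z₂ x) with h | h
    · refine (hm₁ x hx).trans (Real.rpow_le_rpow (abs_nonneg _) ?_ (by positivity))
      exact key_min d n x hx z₁ z₂ hc₁ h
    · refine (hm₂ x hx).trans (Real.rpow_le_rpow (abs_nonneg _) ?_ (by positivity))
      rw [hcomm]
      exact key_min d n x hx z₂ z₁ hc₂ h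
end
end
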